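/- arXiv:2511.16587 — 5 statements merged into one kernel-verified Lean document; each statement's English description precedes it below -/
import Mathlib

section
/- Let {X_t}, {Y_t}, {Z_t} be sequences of nonnegative random variables adapted to a filtration {F_t}, and let {γ_t} be nonnegative reals with ∏_{t=1}^∞ (1+γ_t) < ∞. If E[Y_{t+1} | F_t] ≤ (1+γ_t) Y_t − X_t + Z_t for all t ≥ 1, and ∑_{t=1}^∞ Z_t < ∞ almost surely, then ∑_{t=1}^∞ X_t < ∞ almost surely and Y_t converges almost surely. -/
open MeasureTheory Filter Topology

namespace RobbinsSiegmundAux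

variable {Ω : Type*}

noncomputable def stopV (V S : ℕ → Ω → ℝ) (c : ℝ) : ℕ → Ω → ℝ
  | 0 => V 0
  | (t+1) => fun ω => if S (t+1) ω ≤ c then V (t+1) ω else stopV V S c t ω

lemma stopV_eq {V S : ℕ → Ω → ℝ} {c : ℝ} :
    ∀ {t : ℕ} {ω : Ω}, S t ω ≤ c → stopV V S c t ω = V t ω
  | 0, _, _ => rfl
  | (t+1), ω, h => by simp [stopV, h]

lemma stopV_succ {V S : ℕ → Ω → ℝ} {c : ℝ} (hS : ∀ t ω, S t ω ≤ S (t+1) ω) (t : ℕ) (ω : Ω) :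
    stopV V S c (t+1) ω = stopV V S c t ω +
      Set.indicator {ω | S (t+1) ω ≤ c} (fun ω => V (t+1) ω - V t ω) ω := by
  by_cases h : S (t+1) ω ≤ c
  · have ht : S t ω ≤ c := le_trans (hS t ω) h
    rw [Set.indicator_of_mem (show ω ∈ {ω | S (t+1) ω ≤ c} from h)]
    simp [stopV, h, stopV_eq ht]
  · rw [Set.indicator_of_notMem (show ω ∉ {ω | S (t+1) ω ≤ c} from h)]
    simp [stopV, h]

lemma stopV_ge {V S : ℕ → Ω → ℝ} {c : ℝ} (hc : 0 ≤ c) (ω : Ω) (h0 : 0 ≤ V 0 ω)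
    (hVS : ∀ t, -S t ω ≤ V t ω) : ∀ t, -c ≤ stopV V S c t ω
  | 0 => le_trans (neg_nonpos.2 hc) h0
  | (t+1) => by
      by_cases h : S (t+1) ω ≤ c
      · simpa [stopV, h] using le_trans (neg_le_neg h) (hVS (t+1))
      · simpa [stopV, h] using stopV_ge hc ω h0 hVS t

end RobbinsSiegmundAux

open RobbinsSiegmundAux

/-- Robbins–Siegmund almost-supermartingale convergence theorem. -/
theorem robbins_siegmund
    {Ω : Type*} {m0 : MeasurableSpace Ω} {μ : Measure Ω} [IsProbabilityMeasure μ]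
    (ℱ : Filtration ℕ m0) (X Y Z : ℕ → Ω → ℝ) (γ : ℕ → ℝ)
    (hXpos : ∀ t ω, 0 ≤ X t ω) (hYpos : ∀ t ω, 0 ≤ Y t ω) (hZpos : ∀ t ω, 0 ≤ Z t ω)
    (hXadp : Adapted ℱ X) (hYadp : Adapted ℱ Y) (hZadp : Adapted ℱ Z)
    (hXint : ∀ t, Integrable (X t) μ) (hYint : ∀ t, Integrable (Y t) μ)
    (hZint : ∀ t, Integrable (Z t) μ)
    (hγ : ∀ t, 0 ≤ γ t) (hγprod : Multipliable fun t => 1 + γ t)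
    (hrec : ∀ t, ∀ᵐ ω ∂μ,
      (μ[Y (t + 1) | ℱ t]) ω ≤ (1 + γ t) * Y t ω - X t ω + Z t ω)
    (hZsum : ∀ᵐ ω ∂μ, Summable fun t => Z t ω) :
    ∀ᵐ ω ∂μ,
      (Summable fun t => X t ω) ∧ ∃ l, Tendsto (fun t => Y t ω) atTop (nhds l) := by
  classical
  -- the partial products
  set a : ℕ → ℝ := fun t => ∏ s ∈ Finset.range t, (1 + γ s) with ha_def
  have ha1 : ∀ t, (1:ℝ) ≤ a t := fun t => by
    simp only [ha_def]
    calc (1:ℝ) = ∏ _s ∈ Finset.range t, 1 := Finset.prod_const_one.symm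
    _ ≤ ∏ s ∈ Finset.range t, (1 + γ s) :=
      Finset.prod_le_prod (fun _ _ => zero_le_one) (fun s _ => le_add_of_nonneg_right (hγ s))
  have hapos : ∀ t, (0:ℝ) < a t := fun t => lt_of_lt_of_le one_pos (ha1 t)
  have ha_succ : ∀ t, a (t+1) = a t * (1 + γ t) := fun t => by
    simp only [ha_def]
    exact Finset.prod_range_succ _ t
  have haM : Monotone a := monotone_nat_of_le_succ fun t => by
    rw [ha_succ]; nlinarith [hapos t, hγ t]
  have hatend : Tendsto a atTop (𝓝 (∏' t, (1 + γ t))) := by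
    simp only [ha_def]
    exact hγprod.hasProd.tendsto_prod_nat
  have haP : ∀ t, a t ≤ ∏' t, (1 + γ t) := fun t => haM.ge_of_tendsto hatend t
  have hainv_le : ∀ t, (a t)⁻¹ ≤ 1 := fun t => inv_le_one_of_one_le₀ (ha1 t)
  have hainv_pos : ∀ t, (0:ℝ) < (a t)⁻¹ := fun t => inv_pos.2 (hapos t)
  -- the supermartingale V
  set V : ℕ → Ω → ℝ := fun t ω =>
    (a t)⁻¹ * Y t ω + ∑ s ∈ Finset.range t, (a (s+1))⁻¹ * (X s ω - Z s ω) with hV_def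
  have hVint : ∀ t, Integrable (V t) μ := fun t =>
    ((hYint t).const_mul _).add
      (integrable_finset_sum _ fun s _ => ((hXint s).sub (hZint s)).const_mul _)
  have hVadp : StronglyAdapted ℱ V := fun t => by
    apply StronglyMeasurable.add
    · exact (hYadp t).stronglyMeasurable.const_mul _
    · apply Finset.stronglyMeasurable_fun_sum
      intro s hs
      have hst : s ≤ t := le_of_lt (Finset.mem_range.mp hs)
      exact (((hXadp s).stronglyMeasurable.mono (ℱ.mono hst)).sub ((hZadp s).stronglyMeasurable.mono (ℱ.mono hst))).const_mul _
  have hVsup : Supermartingale V ℱ μ := by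
    refine supermartingale_nat hVadp hVint fun t => ?_
    have hγne : (1 + γ t) ≠ 0 := ne_of_gt (by linarith [hγ t])
    have hkey : (a (t+1))⁻¹ * (1 + γ t) = (a t)⁻¹ := by
      rw [ha_succ, mul_inv, mul_assoc, inv_mul_cancel₀ hγne, mul_one]
    set g : Ω → ℝ := fun ω => ∑ s ∈ Finset.range (t+1), (a (s+1))⁻¹ * (X s ω - Z s ω) with hg_def
    have hgmeas : StronglyMeasurable[ℱ t] g := by
      apply Finset.stronglyMeasurable_fun_sum
      intro s hs
      have hst : s ≤ t := Nat.lt_succ_iff.mp (Finset.mem_range.mp hs)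
      exact (((hXadp s).stronglyMeasurable.mono (ℱ.mono hst)).sub ((hZadp s).stronglyMeasurable.mono (ℱ.mono hst))).const_mul _
    have hgint : Integrable g μ :=
      integrable_finset_sum _ fun s _ => ((hXint s).sub (hZint s)).const_mul _
    have hsplit : V (t+1) = (a (t+1))⁻¹ • Y (t+1) + g := by
      funext ω; simp [hV_def, hg_def, Pi.add_apply, Pi.smul_apply, smul_eq_mul]
    have hcond : μ[V (t+1)|ℱ t] =ᵐ[μ]
        fun ω => (a (t+1))⁻¹ * (μ[Y (t+1)|ℱ t]) ω + g ω := by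
      rw [hsplit]
      refine (condExp_add ((hYint (t+1)).smul _) hgint _).trans ?_
      have h1 : μ[(a (t+1))⁻¹ • Y (t+1)|ℱ t]
          =ᵐ[μ] (a (t+1))⁻¹ • μ[Y (t+1)|ℱ t] := condExp_smul _ _ _
      have h2 : μ[g|ℱ t] = g :=
        condExp_of_stronglyMeasurable (ℱ.le t) hgmeas hgint
      filter_upwards [h1] with ω h1ω
      simp only [Pi.add_apply, h1ω, h2, Pi.smul_apply, smul_eq_mul]
    filter_upwards [hcond, hrec t] with ω h1 h2
    rw [h1]
    have hmul : (a (t+1))⁻¹ * (μ[Y (t+1)|ℱ t]) ω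
        ≤ (a (t+1))⁻¹ * ((1 + γ t) * Y t ω - X t ω + Z t ω) :=
      mul_le_mul_of_nonneg_left h2 (hainv_pos (t+1)).le
    have heq : (a (t+1))⁻¹ * ((1 + γ t) * Y t ω - X t ω + Z t ω)
        + ((a (t+1))⁻¹ * (X t ω - Z t ω)) = (a t)⁻¹ * Y t ω := by
      rw [← hkey]; ring
    have hgω : g ω = ∑ s ∈ Finset.range t, (a (s+1))⁻¹ * (X s ω - Z s ω)
        + (a (t+1))⁻¹ * (X t ω - Z t ω) := Finset.sum_range_succ _ t
    simp only [hV_def]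
    rw [hgω]
    linarith
  -- partial sums of Z, and properties of V needed for stopping
  set S : ℕ → Ω → ℝ := fun t ω => ∑ s ∈ Finset.range t, Z s ω with hS_def
  have hSmono : ∀ t ω, S t ω ≤ S (t+1) ω := fun t ω => by
    simp only [hS_def, Finset.sum_range_succ]
    exact le_add_of_nonneg_right (hZpos t ω)
  have hSmeas : ∀ t, StronglyMeasurable[ℱ t] (S (t+1)) := fun t => by
    simp only [hS_def]
    apply Finset.stronglyMeasurable_fun_sum
    intro s hs
    exact (hZadp s).stronglyMeasurable.mono (ℱ.mono (Nat.lt_succ_iff.mp (Finset.mem_range.mp hs)))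
  have hV0 : ∀ ω, V 0 ω = Y 0 ω := fun ω => by simp [hV_def, ha_def]
  have hVS : ∀ t ω, -S t ω ≤ V t ω := fun t ω => by
    have h1 : ∀ s ∈ Finset.range t, -(Z s ω) ≤ (a (s+1))⁻¹ * (X s ω - Z s ω) := by
      intro s _
      have h2 : (a (s+1))⁻¹ * Z s ω ≤ Z s ω :=
        mul_le_of_le_one_left (hZpos s ω) (hainv_le (s+1))
      nlinarith [mul_nonneg (hainv_pos (s+1)).le (hXpos s ω)]
    have h3 : -S t ω ≤ ∑ s ∈ Finset.range t, (a (s+1))⁻¹ * (X s ω - Z s ω) := by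
      simp only [hS_def]
      rw [← Finset.sum_neg_distrib]
      exact Finset.sum_le_sum h1
    have h4 : 0 ≤ (a t)⁻¹ * Y t ω := mul_nonneg (hainv_pos t).le (hYpos t ω)
    simp only [hV_def]
    linarith
  -- the stopped processes converge a.e.
  have hconv : ∀ c : ℕ, ∀ᵐ ω ∂μ, ∃ l,
      Tendsto (fun t => stopV V S (c:ℝ) t ω) atTop (𝓝 l) := by
    intro c
    set W : ℕ → Ω → ℝ := stopV V S (c:ℝ) with hW_def
    have hAmeas : ∀ t, MeasurableSet[ℱ t] {ω | S (t+1) ω ≤ (c:ℝ)} := fun t =>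
      measurableSet_le (hSmeas t).measurable measurable_const
    have hWadp : ∀ t, StronglyMeasurable[ℱ t] (W t) := by
      intro t
      induction t with
      | zero => exact hVadp 0
      | succ t ih =>
        have he : W (t+1) = fun ω => if S (t+1) ω ≤ (c:ℝ) then V (t+1) ω else W t ω := rfl
        rw [he]
        exact (Measurable.ite (ℱ.mono (Nat.le_succ t) _ (hAmeas t))
          (hVadp (t+1)).measurable (ih.mono (ℱ.mono (Nat.le_succ t))).measurable).stronglyMeasurable
    have hWint : ∀ t, Integrable (W t) μ := by
      intro t
      induction t with
      | zero => exact hVint 0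
      | succ t ih =>
        have he : W (t+1) = fun ω => W t ω +
            Set.indicator {ω | S (t+1) ω ≤ (c:ℝ)} (fun ω => V (t+1) ω - V t ω) ω :=
          funext (stopV_succ hSmono t)
        rw [he]
        exact ih.add (((hVint (t+1)).sub (hVint t)).indicator (ℱ.le t _ (hAmeas t)))
    have hWsup : Supermartingale W ℱ μ := by
      refine supermartingale_nat (fun t => hWadp t) hWint fun t => ?_
      set A := {ω | S (t+1) ω ≤ (c:ℝ)} with hA_def
      set D : Ω → ℝ := fun ω => V (t+1) ω - V t ω with hD_def
      have hDint : Integrable D μ := (hVint (t+1)).sub (hVint t)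
      have he : W (t+1) = W t + A.indicator D := funext (stopV_succ hSmono t)
      have h1 : μ[W (t+1)|ℱ t] =ᵐ[μ] μ[W t|ℱ t] + μ[A.indicator D|ℱ t] := by
        rw [he]
        exact condExp_add (hWint t) (hDint.indicator (ℱ.le t _ (hAmeas t))) _
      have h2 : μ[W t|ℱ t] = W t :=
        condExp_of_stronglyMeasurable (ℱ.le t) (hWadp t) (hWint t)
      have h3 : μ[A.indicator D|ℱ t] =ᵐ[μ] A.indicator (μ[D|ℱ t]) :=
        condExp_indicator hDint (hAmeas t)
      have h4 : μ[D|ℱ t] =ᵐ[μ] μ[V (t+1)|ℱ t] - μ[V t|ℱ t] := by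
        have hDe : D = V (t+1) - V t := rfl
        rw [hDe]
        exact condExp_sub (hVint (t+1)) (hVint t) _
      have h5 : μ[V t|ℱ t] = V t :=
        condExp_of_stronglyMeasurable (ℱ.le t) (hVadp t) (hVint t)
      have h6 := hVsup.2.1 t (t+1) (Nat.le_succ t)
      filter_upwards [h1, h3, h4, h6] with ω h1ω h3ω h4ω h6ω
      rw [h1ω]
      simp only [Pi.add_apply, h2]
      have hind : A.indicator (μ[D|ℱ t]) ω ≤ 0 := by
        by_cases hω : ω ∈ A
        · rw [Set.indicator_of_mem hω, h4ω]
          simp only [Pi.sub_apply, h5]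
          linarith
        · rw [Set.indicator_of_notMem hω]
      rw [h3ω]
      linarith
    have hWge : ∀ t ω, -(c:ℝ) ≤ W t ω := fun t ω =>
      stopV_ge (Nat.cast_nonneg c) ω ((hV0 ω).symm ▸ hYpos 0 ω) (fun t => hVS t ω) t
    have hEW : ∀ t, ∫ ω, W t ω ∂μ ≤ ∫ ω, W 0 ω ∂μ := fun t => by
      have h := hWsup.2.1 0 t (Nat.zero_le t)
      have h2 := integral_mono_ae integrable_condExp (hWint 0) h
      rwa [integral_condExp (ℱ.le 0)] at h2
    have hbdd : ∀ t, eLpNorm (W t) 1 μ ≤ ENNReal.ofReal (∫ ω, W 0 ω ∂μ + 2*(c:ℝ)) := fun t => by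
      rw [eLpNorm_one_eq_lintegral_enorm, ← ofReal_integral_norm_eq_lintegral_enorm (hWint t)]
      apply ENNReal.ofReal_le_ofReal
      have hptw : ∀ ω, ‖W t ω‖ ≤ W t ω + 2*(c:ℝ) := fun ω => by
        rcases abs_cases (W t ω) with ⟨h1, h2⟩ | ⟨h1, h2⟩ <;>
          rw [Real.norm_eq_abs, h1] <;>
          nlinarith [hWge t ω, (Nat.cast_nonneg c : (0:ℝ) ≤ (c:ℕ))]
      calc ∫ ω, ‖W t ω‖ ∂μ ≤ ∫ ω, (W t ω + 2*(c:ℝ)) ∂μ :=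
            integral_mono (hWint t).norm ((hWint t).add (integrable_const _)) hptw
        _ = ∫ ω, W t ω ∂μ + 2*(c:ℝ) := by
            rw [integral_add (hWint t) (integrable_const _), integral_const, probReal_univ]
            simp
        _ ≤ ∫ ω, W 0 ω ∂μ + 2*(c:ℝ) := by linarith [hEW t]
    have hbdd' : ∀ t, eLpNorm ((-W) t) 1 μ ≤ ENNReal.ofReal (∫ ω, W 0 ω ∂μ + 2*(c:ℝ)) := fun t => by
      have he : (-W) t = -(W t) := rfl
      rw [he, eLpNorm_neg]
      exact hbdd t
    filter_upwards [hWsup.neg.exists_ae_tendsto_of_bdd hbdd'] with ω hω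
    obtain ⟨l, hl⟩ := hω
    exact ⟨-l, by simpa using hl.neg⟩
  -- combine
  have hall : ∀ᵐ ω ∂μ, ∀ c : ℕ, ∃ l, Tendsto (fun t => stopV V S (c:ℝ) t ω) atTop (𝓝 l) :=
    ae_all_iff.2 hconv
  filter_upwards [hall, hZsum] with ω hWω hZω
  obtain ⟨c, hc⟩ : ∃ c : ℕ, ∀ t, S t ω ≤ (c:ℝ) := by
    refine ⟨⌈∑' s, Z s ω⌉₊, fun t => le_trans ?_ (Nat.le_ceil _)⟩
    exact hZω.sum_le_tsum (Finset.range t) (fun s _ => hZpos s ω)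
  obtain ⟨l, hl⟩ := hWω c
  have hlV : Tendsto (fun t => V t ω) atTop (𝓝 l) :=
    hl.congr fun t => stopV_eq (hc t)
  have hZnn : ∀ s, 0 ≤ (a (s+1))⁻¹ * Z s ω := fun s =>
    mul_nonneg (hainv_pos (s+1)).le (hZpos s ω)
  have hZsum' : Summable fun s => (a (s+1))⁻¹ * Z s ω :=
    Summable.of_nonneg_of_le hZnn
      (fun s => mul_le_of_le_one_left (hZpos s ω) (hainv_le (s+1))) hZω
  have hPZ := hZsum'.hasSum.tendsto_sum_nat
  have hG : Tendsto (fun t => V t ω + ∑ s ∈ Finset.range t, (a (s+1))⁻¹ * Z s ω) atTop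
      (𝓝 (l + ∑' s, (a (s+1))⁻¹ * Z s ω)) := hlV.add hPZ
  have hGeq : ∀ t, V t ω + ∑ s ∈ Finset.range t, (a (s+1))⁻¹ * Z s ω
      = (a t)⁻¹ * Y t ω + ∑ s ∈ Finset.range t, (a (s+1))⁻¹ * X s ω := fun t => by
    simp only [hV_def]
    rw [add_assoc, ← Finset.sum_add_distrib]
    congr 1
    exact Finset.sum_congr rfl fun s _ => by ring
  obtain ⟨b, hb⟩ := hG.bddAbove_range
  have hXnn : ∀ s, 0 ≤ (a (s+1))⁻¹ * X s ω := fun s =>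
    mul_nonneg (hainv_pos (s+1)).le (hXpos s ω)
  have hXsum' : Summable fun s => (a (s+1))⁻¹ * X s ω := by
    refine summable_of_sum_range_le (c := b) hXnn fun t => ?_
    have h1 := hb (Set.mem_range_self t)
    rw [hGeq t] at h1
    have h2 : 0 ≤ (a t)⁻¹ * Y t ω := mul_nonneg (hainv_pos t).le (hYpos t ω)
    linarith
  have hXsum : Summable fun s => X s ω := by
    refine Summable.of_nonneg_of_le (fun s => hXpos s ω) (fun s => ?_)
      (hXsum'.mul_left (∏' t, (1 + γ t)))
    have h1 : X s ω = a (s+1) * ((a (s+1))⁻¹ * X s ω) := by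
      rw [← mul_assoc, mul_inv_cancel₀ (hapos (s+1)).ne', one_mul]
    exact h1.le.trans (mul_le_mul_of_nonneg_right (haP (s+1)) (hXnn s))
  refine ⟨hXsum, ?_⟩
  have hPX := hXsum'.hasSum.tendsto_sum_nat
  have hU : Tendsto (fun t => (a t)⁻¹ * Y t ω) atTop
      (𝓝 (l + (∑' s, (a (s+1))⁻¹ * Z s ω) - ∑' s, (a (s+1))⁻¹ * X s ω)) := by
    refine (hG.sub hPX).congr fun t => ?_
    rw [hGeq t]
    ring
  refine ⟨(∏' t, (1 + γ t)) *
    (l + (∑' s, (a (s+1))⁻¹ * Z s ω) - ∑' s, (a (s+1))⁻¹ * X s ω), ?_⟩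
  refine (hatend.mul hU).congr fun t => ?_
  rw [← mul_assoc, mul_inv_cancel₀ (hapos t).ne', one_mul]
end

section
/- Let {X_t} be a sequence of nonnegative real numbers and {α_t} a decreasing sequence of positive real numbers such that ∑_{t=1}^∞ α_t X_t < ∞ and ∑_{t=1}^∞ α_t / (∑_{i=1}^{t-1} α_i) = ∞. Then min_{1 ≤ i ≤ t} X_i = o(1 / ∑_{i=1}^{t-1} α_i), i.e., (∑_{i=1}^{t-1} α_i) · min_{1 ≤ i ≤ t} X_i → 0 as t → ∞. -/
open Filter Finset Topology

/-!
The running minimum `m T = min_{i ≤ T} X_i` is antitone and `α_i m_i ≤ α_i X_i`, so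
`∑ α_i m_i < ∞`. For `N ≤ T`, antitonicity gives `m_T ∑_{N ≤ i < T} α_i ≤ ∑_{i ≥ N} α_i m_i`,
and since `∑ α_i = ∞` the block `[N, T)` eventually carries at least half of `∑_{i < T} α_i`.
Hence `(∑_{i < T} α_i) m_T` is eventually at most twice an arbitrarily small tail.
-/

lemma tendsto_zero_of_forall_eventually_le {ι κ : Type*} {l : Filter ι} {l' : Filter κ}
    [l'.NeBot] {f : ι → ℝ} {g : κ → ℝ} (hf : ∀ i, 0 ≤ f i) (hg : Tendsto g l' (𝓝 0))
    (hle : ∀ k, ∀ᶠ i in l, f i ≤ g k) : Tendsto f l (𝓝 0) := by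
  refine tendsto_order.2 ⟨fun a ha => Eventually.of_forall fun i => ha.trans_le (hf i),
    fun a ha => ?_⟩
  obtain ⟨k, hk⟩ := (hg.eventually (gt_mem_nhds ha)).exists
  exact (hle k).mono fun i hi => hi.trans_lt hk

lemma Antitone.mul_sum_Ico_le {w m : ℕ → ℝ} (hm : Antitone m) (hw : ∀ i, 0 ≤ w i)
    (N T : ℕ) : m T * ∑ i ∈ Ico N T, w i ≤ ∑ i ∈ Ico N T, w i * m i := by
  rw [mul_sum]
  refine sum_le_sum fun i hi => ?_
  rw [mul_comm]
  exact mul_le_mul_of_nonneg_left (hm (mem_Ico.1 hi).2.le) (hw i)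

theorem Antitone.tendsto_sum_range_mul_of_summable {w m : ℕ → ℝ} (hm : Antitone m)
    (hm0 : ∀ i, 0 ≤ m i) (hw : ∀ i, 0 ≤ w i) (hw_div : ¬ Summable w)
    (hsum : Summable fun i => w i * m i) :
    Tendsto (fun T => (∑ i ∈ range T, w i) * m T) atTop (𝓝 0) := by
  set S : ℕ → ℝ := fun T => ∑ i ∈ range T, w i
  set P : ℕ → ℝ := fun T => ∑ i ∈ range T, w i * m i
  have hwm : ∀ i, 0 ≤ w i * m i := fun i => mul_nonneg (hw i) (hm0 i)
  have hS : Tendsto S atTop atTop := (not_summable_iff_tendsto_nat_atTop_of_nonneg hw).1 hw_div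
  have htail : Tendsto (fun N => 2 * (∑' i, w i * m i - P N)) atTop (𝓝 0) := by
    simpa using ((tendsto_const_nhds.sub hsum.hasSum.tendsto_sum_nat).const_mul 2 :
      Tendsto _ atTop (𝓝 (2 * (∑' i, w i * m i - ∑' i, w i * m i))))
  refine tendsto_zero_of_forall_eventually_le (fun T => mul_nonneg (sum_nonneg fun i _ => hw i)
    (hm0 T)) htail fun N => ?_
  filter_upwards [hS.eventually_ge_atTop (2 * S N), eventually_ge_atTop N] with T hST hNT
  have hblock : S T - S N = ∑ i ∈ Ico N T, w i := (sum_Ico_eq_sub _ hNT).symm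
  have hPblock : P T - P N = ∑ i ∈ Ico N T, w i * m i := (sum_Ico_eq_sub _ hNT).symm
  have hPT : P T ≤ ∑' i, w i * m i := hsum.sum_le_tsum _ fun i _ => hwm i
  calc S T * m T ≤ 2 * (S T - S N) * m T := by gcongr; exacts [hm0 T, by linarith]
    _ = 2 * (m T * ∑ i ∈ Ico N T, w i) := by rw [hblock]; ring
    _ ≤ 2 * (P T - P N) := by rw [hPblock]; gcongr; exact hm.mul_sum_Ico_le hw N T
    _ ≤ 2 * (∑' i, w i * m i - P N) := by linarith

lemma not_summable_of_not_summable_div_sum_range {α : ℕ → ℝ} (hα : ∀ t, 0 ≤ α t)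
    (hα0 : 0 < α 0) (hdiv : ¬ Summable fun t => α (t + 1) / ∑ i ∈ range (t + 1), α i) :
    ¬ Summable α := by
  refine fun h => hdiv (((summable_nat_add_iff 1).2 h).div_const (α 0) |>.of_nonneg_of_le
    (fun t => div_nonneg (hα _) (sum_nonneg fun i _ => hα i)) fun t => ?_)
  exact div_le_div_of_nonneg_left (hα _) hα0
    (single_le_sum (fun i _ => hα i) (mem_range.2 t.succ_pos))

theorem min_little_o_of_summable_general (X α : ℕ → ℝ)
    (hX : ∀ t, 0 ≤ X t) (hα : ∀ t, 0 < α t)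
    (hsum : Summable fun t => α t * X t)
    (hdiv : ¬ Summable fun t => α (t + 1) / ∑ i ∈ Finset.range (t + 1), α i) :
    Tendsto
      (fun t => (∑ i ∈ Finset.range t, α i) *
        (Finset.range (t + 1)).inf' Finset.nonempty_range_add_one X)
      atTop (nhds 0) := by
  set m : ℕ → ℝ := fun t => (range (t + 1)).inf' nonempty_range_add_one X
  have hm_anti : Antitone m := fun s t hst =>
    inf'_mono X (range_subset_range.2 (Nat.succ_le_succ hst)) _
  have hm_le : ∀ t, m t ≤ X t := fun t => inf'_le X (self_mem_range_succ t)
  have hm0 : ∀ t, 0 ≤ m t := fun t => le_inf' _ _ fun i _ => hX i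
  have hαm : Summable fun t => α t * m t := hsum.of_nonneg_of_le
    (fun t => mul_nonneg (hα t).le (hm0 t)) fun t => mul_le_mul_of_nonneg_left (hm_le t) (hα t).le
  exact hm_anti.tendsto_sum_range_mul_of_summable hm0 (fun t => (hα t).le)
    (not_summable_of_not_summable_div_sum_range (fun t => (hα t).le) (hα 0) hdiv) hαm

/-- Lemma 2 of Liu–Yuan: if `X` is nonnegative, `α` is positive and
decreasing, `∑ α_t X_t < ∞` and `∑ α_t / (∑_{i<t} α_i) = ∞`, then
`min_{i ≤ t} X_i = o(1 / ∑_{i<t} α_i)`. -/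
theorem min_little_o_of_summable (X α : ℕ → ℝ)
    (hX : ∀ t, 0 ≤ X t) (hα : ∀ t, 0 < α t) (hmono : Antitone α)
    (hsum : Summable fun t => α t * X t)
    (hdiv : ¬ Summable fun t => α (t + 1) / ∑ i ∈ Finset.range (t + 1), α i) :
    Tendsto
      (fun t => (∑ i ∈ Finset.range t, α i) *
        (Finset.range (t + 1)).inf' Finset.nonempty_range_add_one X)
      atTop (nhds 0) :=
  min_little_o_of_summable_general X α hX hα hsum hdiv
end

section
/- Let f: R^d → R be L-smooth (∇f is L-Lipschitz) and bounded below by f*. Consider iterates x_{t+1} = x_t − α_t g_t where the random vectors g_t satisfy E[‖g_t‖² | x_t] ≤ C for a constant C > 0 and −E[⟨∇f(x_t), g_t⟩ | x_t] ≤ −Φ_t for nonnegative F_t-measurable Φ_t. If ∑_t α_t² < ∞, then ∑_{t=1}^∞ α_t Φ_t < ∞ almost surely. -/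
open MeasureTheory Filter Topology RealInnerProductSpace
open scoped NNReal

/-! By the descent lemma for an `L`-smooth `f`, the process `V t = f (x t)` satisfies
`E[V (t+1) | ℱ t] ≤ V t - α t Φ t + c t` with `c t = L/2 α t² C` summable. Adding the decrease
`∑_{s<t} α s Φ s` achieved so far and the remaining budget `∑_{s≥t} c s` to `V t - f*` gives a
nonnegative supermartingale; it converges almost surely, so the partial sums of `α t Φ t` stay
bounded. -/

section RobbinsSiegmund

variable {Ω : Type*} {m0 : MeasurableSpace Ω} {μ : Measure Ω} [IsFiniteMeasure μ]
  {ℱ : Filtration ℕ m0}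

theorem MeasureTheory.Supermartingale.ae_bddAbove_range_of_nonneg {W : ℕ → Ω → ℝ}
    (hW : Supermartingale W ℱ μ) (hW0 : ∀ n ω, 0 ≤ W n ω) :
    ∀ᵐ ω ∂μ, BddAbove (Set.range fun n => W n ω) := by
  have hbdd : ∀ n, eLpNorm (-W n) 1 μ ≤ ENNReal.ofReal (∫ ω, W 0 ω ∂μ) := by
    intro n
    rw [eLpNorm_neg, eLpNorm_one_eq_lintegral_enorm,
      ← ofReal_integral_norm_eq_lintegral_enorm (hW.integrable n)]
    refine ENNReal.ofReal_le_ofReal ?_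
    calc ∫ ω, ‖W n ω‖ ∂μ = ∫ ω, W n ω ∂μ :=
          integral_congr_ae (.of_forall fun ω => Real.norm_of_nonneg (hW0 n ω))
      _ ≤ ∫ ω, W 0 ω ∂μ := by simpa using hW.setIntegral_le (Nat.zero_le n) MeasurableSet.univ
  filter_upwards [hW.neg.exists_ae_tendsto_of_bdd hbdd] with ω ⟨c, hc⟩
  simpa using hc.neg.bddAbove_range

theorem ae_summable_of_condExp_le_sub_add {V U : ℕ → Ω → ℝ} {c : ℕ → ℝ} {b : ℝ}
    (hVadp : Adapted ℱ V) (hVint : ∀ t, Integrable (V t) μ) (hVb : ∀ t ω, b ≤ V t ω)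
    (hUadp : Adapted ℱ U) (hUint : ∀ t, Integrable (U t) μ) (hU0 : ∀ t ω, 0 ≤ U t ω)
    (hc0 : ∀ t, 0 ≤ c t) (hc : Summable c)
    (hstep : ∀ t, μ[V (t + 1) | ℱ t] ≤ᵐ[μ] fun ω => V t ω - U t ω + c t) :
    ∀ᵐ ω ∂μ, Summable fun t => U t ω := by
  set A : ℕ → Ω → ℝ := fun t ω => ∑ s ∈ Finset.range t, (U s ω - c s) + ∑' s, c s - b
  have hAadp : ∀ n t, n ≤ t + 1 → Measurable[ℱ t] (A n) := by
    intro n t hnt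
    refine ((Finset.measurable_sum _ fun s hs => ?_).add_const _).sub_const _
    have hst : s ≤ t := by have := Finset.mem_range.1 hs; omega
    exact ((hUadp s).mono (ℱ.mono hst) le_rfl).sub_const _
  have hAint : ∀ t, Integrable (A t) μ := fun t =>
    ((integrable_finsetSum _ fun s _ => (hUint s).sub (integrable_const _)).add
      (integrable_const _)).sub (integrable_const _)
  have hW : Supermartingale (fun t => V t + A t) ℱ μ := by
    refine supermartingale_nat (Adapted.stronglyAdapted fun t => ?_)
      (fun t => (hVint t).add (hAint t)) fun t => ?_
    · exact (hVadp t).add (hAadp t t t.le_succ)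
    · have hA := condExp_of_stronglyMeasurable (ℱ.le t) (hAadp _ t le_rfl).stronglyMeasurable
        (hAint (t + 1))
      filter_upwards [condExp_add (m := ℱ t) (hVint (t + 1)) (hAint (t + 1)), hstep t]
        with ω hadd hV
      change μ[V (t + 1) + A (t + 1) | ℱ t] ω ≤ V t ω + A t ω
      rw [hadd, Pi.add_apply, hA]
      simp only [A, Finset.sum_range_succ]
      linarith
  have hpartial : ∀ t, ∑ s ∈ Finset.range t, c s ≤ ∑' s, c s := fun t =>
    hc.sum_le_tsum _ fun s _ => hc0 s
  have hW0 : ∀ t ω, 0 ≤ V t ω + A t ω := by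
    intro t ω
    have hU : 0 ≤ ∑ s ∈ Finset.range t, U s ω := Finset.sum_nonneg fun s _ => hU0 s ω
    simp only [A, Finset.sum_sub_distrib]
    linarith [hVb t ω, hpartial t]
  filter_upwards [hW.ae_bddAbove_range_of_nonneg hW0] with ω ⟨M, hM⟩
  refine summable_of_sum_range_le (c := M) (fun t => hU0 t ω) fun t => ?_
  have := hM ⟨t, rfl⟩
  simp only [Pi.add_apply, A, Finset.sum_sub_distrib] at this
  linarith [hVb t ω, hpartial t]

end RobbinsSiegmund

section Smooth

variable {E : Type*} [NormedAddCommGroup E] [InnerProductSpace ℝ E] [CompleteSpace E]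

theorem apply_le_add_inner_add_sq_of_lipschitzWith_gradient {f : E → ℝ} {f' : E → E}
    {K : ℝ≥0} (hgrad : ∀ y, HasGradientAt f (f' y) y) (hlip : LipschitzWith K f') (p q : E) :
    f q ≤ f p + ⟪f' p, q - p⟫ + K / 2 * ‖q - p‖ ^ 2 := by
  set v := q - p
  set φ : ℝ → ℝ := fun t => f (p + t • v) - t * ⟪f' p, v⟫ - K / 2 * t ^ 2 * ‖v‖ ^ 2
  have hφ : ∀ t, HasDerivAt φ (⟪f' (p + t • v) - f' p, v⟫ - K * t * ‖v‖ ^ 2) t := by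
    intro t
    have hline : HasDerivAt (fun s : ℝ => p + s • v) v t := by
      simpa using ((hasDerivAt_id t).smul_const v).const_add p
    have hf := (hgrad (p + t • v)).hasFDerivAt.comp_hasDerivAt t hline
    simp only [InnerProductSpace.toDual_apply_apply] at hf
    refine ((hf.sub ((hasDerivAt_id t).mul_const ⟪f' p, v⟫)).sub
      (((hasDerivAt_pow 2 t).const_mul ((K : ℝ) / 2)).mul_const (‖v‖ ^ 2))).congr_deriv ?_
    simp only [inner_sub_left]
    ring
  have hφ' : ∀ t ∈ interior (Set.Icc (0 : ℝ) 1), deriv φ t ≤ 0 := by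
    intro t ht
    rw [interior_Icc] at ht
    rw [(hφ t).deriv, sub_nonpos]
    calc ⟪f' (p + t • v) - f' p, v⟫ ≤ ‖f' (p + t • v) - f' p‖ * ‖v‖ := real_inner_le_norm _ _
      _ ≤ K * ‖t • v‖ * ‖v‖ := by
        gcongr
        simpa [dist_eq_norm] using hlip.dist_le_mul (p + t • v) p
      _ = K * t * ‖v‖ ^ 2 := by rw [norm_smul, Real.norm_of_nonneg ht.1.le]; ring
  have hanti : AntitoneOn φ (Set.Icc 0 1) :=
    antitoneOn_of_deriv_nonpos (convex_Icc 0 1)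
      (fun t _ => (hφ t).continuousAt.continuousWithinAt)
      (fun t _ => (hφ t).differentiableAt.differentiableWithinAt) hφ'
  have h10 : φ 1 ≤ φ 0 := hanti (by norm_num) (by norm_num) zero_le_one
  norm_num [φ, v] at h10
  linarith

theorem condExp_le_of_gradient_step {Ω : Type*} {m m0 : MeasurableSpace Ω} {μ : Measure Ω}
    [IsFiniteMeasure μ] (hm : m ≤ m0)
    {f : E → ℝ} {f' : E → E} {K : ℝ≥0} (hgrad : ∀ y, HasGradientAt f (f' y) y)
    (hlip : LipschitzWith K f') {X Y G : Ω → E} {Φ : Ω → ℝ} {a C : ℝ} (ha : 0 ≤ a)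
    (hY : ∀ ω, Y ω = X ω - a • G ω) (hfX : StronglyMeasurable[m] fun ω => f (X ω))
    (hfXint : Integrable (fun ω => f (X ω)) μ) (hfYint : Integrable (fun ω => f (Y ω)) μ)
    (hG2int : Integrable (fun ω => ‖G ω‖ ^ 2) μ)
    (hinnerint : Integrable (fun ω => ⟪f' (X ω), G ω⟫) μ)
    (hG2 : ∀ᵐ ω ∂μ, (μ[fun ω => ‖G ω‖ ^ 2 | m]) ω ≤ C)
    (hinner : ∀ᵐ ω ∂μ, (μ[fun ω => -⟪f' (X ω), G ω⟫ | m]) ω ≤ -Φ ω) :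
    μ[fun ω => f (Y ω) | m] ≤ᵐ[μ] fun ω => f (X ω) - a * Φ ω + K / 2 * a ^ 2 * C := by
  set B : Ω → ℝ := fun ω => -⟪f' (X ω), G ω⟫
  set N : Ω → ℝ := fun ω => ‖G ω‖ ^ 2
  have hpointwise : ∀ ω, f (Y ω) ≤ ((fun ω => f (X ω)) + a • B + ((K : ℝ) / 2 * a ^ 2) • N) ω := by
    intro ω
    have := apply_le_add_inner_add_sq_of_lipschitzWith_gradient hgrad hlip (X ω) (Y ω)
    rw [hY, sub_sub_cancel_left, inner_neg_right, real_inner_smul_right, norm_neg, norm_smul,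
      mul_pow, Real.norm_eq_abs, sq_abs] at this
    simp only [hY, Pi.add_apply, Pi.smul_apply, smul_eq_mul, B, N]
    linarith
  have hBint : Integrable B μ := hinnerint.neg
  filter_upwards [condExp_mono (m := m) hfYint ((hfXint.add (hBint.smul a)).add (hG2int.smul _))
      (.of_forall hpointwise),
    condExp_add (m := m) (hfXint.add (hBint.smul a)) (hG2int.smul ((K : ℝ) / 2 * a ^ 2)),
    condExp_add (m := m) hfXint (hBint.smul a), condExp_smul (m := m) a B,
    condExp_smul (m := m) ((K : ℝ) / 2 * a ^ 2) N, hinner, hG2]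
    with ω hmono hadd₁ hadd₂ hsmulB hsmulN hB hN
  rw [hadd₁, Pi.add_apply, hadd₂, Pi.add_apply, condExp_of_stronglyMeasurable hm hfX hfXint,
    hsmulB, hsmulN] at hmono
  simp only [Pi.smul_apply, smul_eq_mul] at hmono
  have hdescent : a * (μ[B | m]) ω ≤ a * -Φ ω := mul_le_mul_of_nonneg_left hB ha
  have hnoise : (K : ℝ) / 2 * a ^ 2 * (μ[N | m]) ω ≤ K / 2 * a ^ 2 * C :=
    mul_le_mul_of_nonneg_left hN (by positivity)
  linarith

end Smooth

theorem dp_sgd_summability_general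
    {Ω : Type*} {m0 : MeasurableSpace Ω} {P : Measure Ω} [IsProbabilityMeasure P]
    {d : ℕ} (ℱ : Filtration ℕ m0)
    (f : EuclideanSpace ℝ (Fin d) → ℝ)
    (f' : EuclideanSpace ℝ (Fin d) → EuclideanSpace ℝ (Fin d))
    (L C fstar : ℝ) (hC : 0 < C)
    (hgrad : ∀ y, HasGradientAt f (f' y) y)
    (hlip : LipschitzWith (Real.toNNReal L) f')
    (hbdd : ∀ y, fstar ≤ f y)
    (x g : ℕ → Ω → EuclideanSpace ℝ (Fin d)) (Φ : ℕ → Ω → ℝ) (α : ℕ → ℝ)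
    (hxadp : Adapted ℱ x) (hΦadp : Adapted ℱ Φ) (hΦpos : ∀ t ω, 0 ≤ Φ t ω)
    (hΦint : ∀ t, Integrable (Φ t) P)
    (hfint : ∀ t, Integrable (fun ω => f (x t ω)) P)
    (hg2int : ∀ t, Integrable (fun ω => ‖g t ω‖ ^ 2) P)
    (hinnerint : ∀ t, Integrable (fun ω => ⟪f' (x t ω), g t ω⟫) P)
    (hrec : ∀ t ω, x (t + 1) ω = x t ω - α t • g t ω)
    (hg2 : ∀ t, ∀ᵐ ω ∂P, (P[fun ω => ‖g t ω‖ ^ 2 | ℱ t]) ω ≤ C)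
    (hinner : ∀ t, ∀ᵐ ω ∂P,
      (P[fun ω => -⟪f' (x t ω), g t ω⟫ | ℱ t]) ω ≤ -Φ t ω)
    (hαpos : ∀ t, 0 < α t) (hα2 : Summable fun t => α t ^ 2) :
    ∀ᵐ ω ∂P, Summable fun t => α t * Φ t ω := by
  have hfcont : Continuous f :=
    continuous_iff_continuousAt.2 fun y => (hgrad y).differentiableAt.continuousAt
  have hfx : Adapted ℱ fun t ω => f (x t ω) := fun t => hfcont.measurable.comp (hxadp t)
  refine ae_summable_of_condExp_le_sub_add (c := fun t => L.toNNReal / 2 * α t ^ 2 * C) hfx hfint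
    (fun t ω => hbdd (x t ω)) (fun t => (hΦadp t).const_mul (α t))
    (fun t => (hΦint t).const_mul (α t)) (fun t ω => mul_nonneg (hαpos t).le (hΦpos t ω))
    (fun t => by positivity) ((hα2.mul_left _).mul_right C) fun t => ?_
  exact condExp_le_of_gradient_step (ℱ.le t) hgrad hlip (hαpos t).le (hrec t)
    (hfx t).stronglyMeasurable (hfint t) (hfint (t + 1)) (hg2int t) (hinnerint t) (hg2 t) (hinner t)

/-- abstract DP-SGD descent recursion. For `L`-smooth `f` bounded
below, iterates `x_{t+1} = x_t − α_t g_t` with conditionally bounded second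
moments and conditional descent `−E_t⟨∇f(x_t), g_t⟩ ≤ −Φ_t`, square-summable
steps give `∑ α_t Φ_t < ∞` almost surely. -/
theorem dp_sgd_summability
    {Ω : Type*} {m0 : MeasurableSpace Ω} {P : Measure Ω} [IsProbabilityMeasure P]
    {d : ℕ} (ℱ : Filtration ℕ m0)
    (f : EuclideanSpace ℝ (Fin d) → ℝ)
    (f' : EuclideanSpace ℝ (Fin d) → EuclideanSpace ℝ (Fin d))
    (L C fstar : ℝ) (hL : 0 < L) (hC : 0 < C)
    (hgrad : ∀ y, HasGradientAt f (f' y) y)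
    (hlip : LipschitzWith (Real.toNNReal L) f')
    (hbdd : ∀ y, fstar ≤ f y)
    (x g : ℕ → Ω → EuclideanSpace ℝ (Fin d)) (Φ : ℕ → Ω → ℝ) (α : ℕ → ℝ)
    (hxadp : Adapted ℱ x) (hΦadp : Adapted ℱ Φ) (hΦpos : ∀ t ω, 0 ≤ Φ t ω)
    (hΦint : ∀ t, Integrable (Φ t) P)
    (hfint : ∀ t, Integrable (fun ω => f (x t ω)) P)
    (hg2int : ∀ t, Integrable (fun ω => ‖g t ω‖ ^ 2) P)
    (hinnerint : ∀ t, Integrable (fun ω => ⟪f' (x t ω), g t ω⟫) P)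
    (hrec : ∀ t ω, x (t + 1) ω = x t ω - α t • g t ω)
    (hg2 : ∀ t, ∀ᵐ ω ∂P, (P[fun ω => ‖g t ω‖ ^ 2 | ℱ t]) ω ≤ C)
    (hinner : ∀ t, ∀ᵐ ω ∂P,
      (P[fun ω => -⟪f' (x t ω), g t ω⟫ | ℱ t]) ω ≤ -Φ t ω)
    (hαpos : ∀ t, 0 < α t) (hα2 : Summable fun t => α t ^ 2) :
    ∀ᵐ ω ∂P, Summable fun t => α t * Φ t ω :=
  dp_sgd_summability_general ℱ f f' L C fstar hC hgrad hlip hbdd x g Φ α hxadp hΦadp hΦpos hΦint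
    hfint hg2int hinnerint hrec hg2 hinner hαpos hα2
end

section
/- Let f: R^d → R be L-smooth, bounded below by f*, and consider DP-SGD iterates x_{t+1} = x_t − α_t g_t^{DP} where E_t‖g_t^{DP}‖² ≤ q²(1 + dσ²) and −E_t⟨∇f(x_t), g_t^{DP}⟩ ≤ −(1−η_t)‖∇f(x_t)‖² − D η_t q ‖∇f(x_t)‖ with η_t ∈ [0,1], D > 0. If {α_t} is positive decreasing with ∑ α_t² < ∞ and ∑_{t≥2} α_t/(∑_{i<t} α_i) = ∞, then almost surely min_{1≤i≤t} [(1−η_i)‖∇f(x_i)‖² + D η_i q ‖∇f(x_i)‖] = o(1/∑_{i=1}^{t-1} α_i). -/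
open MeasureTheory Filter RealInnerProductSpace

/-!
The descent lemma for the `L`-smooth `f`, averaged over one step, gives
`αₜ E⟪∇f(xₜ), gₜ⟫ ≤ E f(xₜ) - E f(xₜ₊₁) + (L/2) C αₜ²` with `C = q²(1 + dσ²)`.
Since `E_t⟪∇f(xₜ), gₜ⟫ ≥ hₜ := (1 - ηₜ)‖∇f(xₜ)‖² + D ηₜ q ‖∇f(xₜ)‖ ≥ 0` and `f ≥ f*`,
telescoping and `∑ αₜ² < ∞` give `∑ αₜ E hₜ < ∞`, hence `∑ αₜ hₜ < ∞` almost surely.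
Pathwise, `∑ αₜ = ∞` (forced by the divergence of `∑ αₜ₊₁ / ∑_{i≤t} αᵢ`) then makes
`(∑_{i<t} αᵢ) · min_{i≤t} hᵢ → 0`.
-/

open Finset in
theorem summable_div_sum_range_of_summable {α : ℕ → ℝ} (hα : ∀ t, 0 ≤ α t) (hα0 : 0 < α 0)
    (hs : Summable α) : Summable fun t => α (t + 1) / ∑ i ∈ range (t + 1), α i :=
  (((summable_nat_add_iff 1).mpr hs).div_const (α 0)).of_nonneg_of_le
    (fun _ => div_nonneg (hα _) (sum_nonneg fun i _ => hα i))
    fun t => div_le_div_of_nonneg_left (hα _) hα0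
      (single_le_sum (f := α) (fun i _ => hα i) (mem_range.mpr t.succ_pos))

open Finset in
theorem summable_of_le_sub_add {a c F : ℕ → ℝ} {B : ℝ} (ha : ∀ t, 0 ≤ a t) (hc : ∀ t, 0 ≤ c t)
    (hcs : Summable c) (hF : ∀ t, B ≤ F t) (h : ∀ t, a t ≤ F t - F (t + 1) + c t) :
    Summable a := by
  refine summable_of_sum_range_le (c := F 0 - B + ∑' t, c t) ha fun n => ?_
  calc ∑ t ∈ range n, a t ≤ ∑ t ∈ range n, (F t - F (t + 1) + c t) := sum_le_sum fun t _ => h t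
    _ = F 0 - F n + ∑ t ∈ range n, c t := by rw [sum_add_distrib, sum_range_sub']
    _ ≤ F 0 - B + ∑' t, c t := by
      gcongr
      · exact hF n
      · exact hcs.sum_le_tsum _ (fun t _ => hc t)

open Finset Topology in
theorem tendsto_sum_range_mul_inf'_of_summable_mul {α b : ℕ → ℝ} (hα : ∀ t, 0 ≤ α t)
    (hb : ∀ t, 0 ≤ b t) (hα_not : ¬ Summable α) (hαb : Summable fun t => α t * b t) :
    Tendsto (fun t => (∑ i ∈ range t, α i) * (range (t + 1)).inf' nonempty_range_add_one b)
      atTop (𝓝 0) := by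
  set S : ℕ → ℝ := fun t => ∑ i ∈ range t, α i
  set m : ℕ → ℝ := fun t => (range (t + 1)).inf' nonempty_range_add_one b
  have hm_le : ∀ i t, i ≤ t → m t ≤ b i := fun i t hit =>
    inf'_le b (mem_range.mpr (Nat.lt_succ_of_le hit))
  have hm_nonneg : ∀ t, 0 ≤ m t := fun t => le_inf' _ _ fun i _ => hb i
  have hm_anti : Antitone m := fun s t hst =>
    le_inf' _ _ fun i hi => hm_le i t ((Nat.lt_succ_iff.mp (mem_range.mp hi)).trans hst)
  have hm_tendsto : Tendsto m atTop (𝓝 0) := by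
    have hlim := tendsto_atTop_ciInf hm_anti ⟨0, Set.forall_mem_range.mpr hm_nonneg⟩
    set c := ⨅ t, m t
    suffices c = 0 by rwa [this] at hlim
    by_contra hc
    have hc_pos : 0 < c := (ge_of_tendsto' hlim hm_nonneg).lt_of_ne' hc
    have hc_le : ∀ i, c ≤ b i := fun i => (hm_anti.le_of_tendsto hlim i).trans (hm_le i i le_rfl)
    refine hα_not ((hαb.div_const c).of_nonneg_of_le hα fun i => ?_)
    rw [le_div_iff₀ hc_pos]
    exact mul_le_mul_of_nonneg_left (hc_le i) (hα i)
  -- Split `S t` at `T`: the head is killed by `m t → 0`, the tail by the tail of `∑ αᵢ bᵢ`.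
  have hsplit : ∀ T t, T ≤ t → S t * m t ≤ S T * m t + ∑' k, α (k + T) * b (k + T) := by
    intro T t hTt
    calc S t * m t = S T * m t + ∑ i ∈ Ico T t, α i * m t := by
          simp only [S]
          rw [← sum_range_add_sum_Ico α hTt, add_mul, ← sum_mul]
      _ ≤ S T * m t + ∑ i ∈ Ico T t, α i * b i := by
          gcongr with i hi
          · exact hα i
          · exact hm_le i t (mem_Ico.mp hi).2.le
      _ ≤ S T * m t + ∑' k, α (k + T) * b (k + T) := by
          rw [sum_Ico_eq_sum_range]
          simp_rw [add_comm T]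
          gcongr
          exact Summable.sum_le_tsum _ (fun k _ => mul_nonneg (hα _) (hb _))
            ((summable_nat_add_iff T).mpr hαb)
  refine tendsto_order.2 ⟨fun a ha => Eventually.of_forall fun t =>
    ha.trans_le (mul_nonneg (sum_nonneg fun i _ => hα i) (hm_nonneg t)), fun ε hε => ?_⟩
  obtain ⟨T, hT⟩ :=
    ((tendsto_sum_nat_add fun n => α n * b n).eventually (gt_mem_nhds (half_pos hε))).exists
  have hhead : ∀ᶠ t in atTop, S T * m t < ε / 2 := by
    have hlim := hm_tendsto.const_mul (S T)
    rw [mul_zero] at hlim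
    exact hlim.eventually (gt_mem_nhds (half_pos hε))
  filter_upwards [hhead, eventually_ge_atTop T] with t ht hTt
  linarith [hsplit T t hTt]

theorem ae_summable_of_summable_integral {X : Type*} {_ : MeasurableSpace X} {μ : Measure X}
    {Y : ℕ → X → ℝ} (hY : ∀ n, Integrable (Y n) μ) (hY0 : ∀ n, 0 ≤ᵐ[μ] Y n)
    (h : Summable fun n => ∫ a, Y n a ∂μ) : ∀ᵐ a ∂μ, Summable fun n => Y n a := by
  have hnorm : ∀ n, ∫ a, ‖Y n a‖ ∂μ = ∫ a, Y n a ∂μ := fun n =>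
    integral_congr_ae <| (hY0 n).mono fun a ha => Real.norm_of_nonneg ha
  have hfin : ∑' n, eLpNorm (Y n) 1 μ ≠ ⊤ := by
    simp_rw [eLpNorm_one_eq_lintegral_enorm, ← ofReal_integral_norm_eq_lintegral_enorm (hY _),
      hnorm, ← ENNReal.ofReal_tsum_of_nonneg (fun n => integral_nonneg_of_ae (hY0 n)) h]
    exact ENNReal.ofReal_ne_top
  filter_upwards [summable_norm_of_tsum_eLpNorm_ne_top le_rfl
    (fun n => (hY n).aestronglyMeasurable) hfin] with a ha
  exact ha.of_norm

theorem ae_summable_of_integral_le_sub_add {Ω : Type*} {_ : MeasurableSpace Ω} {P : Measure Ω}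
    [IsProbabilityMeasure P] {V Y : ℕ → Ω → ℝ} {c : ℕ → ℝ} {B : ℝ}
    (hV : ∀ t, Integrable (V t) P) (hVB : ∀ t ω, B ≤ V t ω)
    (hY : ∀ t, Integrable (Y t) P) (hY0 : ∀ t, 0 ≤ᵐ[P] Y t)
    (hc : ∀ t, 0 ≤ c t) (hcs : Summable c)
    (hstep : ∀ t, ∫ ω, Y t ω ∂P ≤ ∫ ω, V t ω ∂P - ∫ ω, V (t + 1) ω ∂P + c t) :
    ∀ᵐ ω ∂P, Summable fun t => Y t ω := by
  have hVB' : ∀ t, B ≤ ∫ ω, V t ω ∂P := fun t => by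
    simpa using integral_mono (integrable_const B) (hV t) (hVB t)
  exact ae_summable_of_summable_integral hY hY0
    (summable_of_le_sub_add (fun t => integral_nonneg_of_ae (hY0 t)) hc hcs hVB' hstep)

theorem integral_le_of_ae_condExp_le {Ω : Type*} {m m0 : MeasurableSpace Ω} {P : Measure Ω}
    [IsProbabilityMeasure P] (hm : m ≤ m0) {Z : Ω → ℝ} {c : ℝ} (h : ∀ᵐ ω ∂P, P[Z | m] ω ≤ c) :
    ∫ ω, Z ω ∂P ≤ c := by
  simpa [integral_condExp hm] using integral_mono_ae integrable_condExp (integrable_const c) h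

section Descent

variable {E : Type*} [NormedAddCommGroup E] [InnerProductSpace ℝ E] [CompleteSpace E]
  {f : E → ℝ} {f' : E → E} {L : ℝ}

theorem le_add_inner_add_sq_of_lipschitzWith_gradient (hL : 0 ≤ L)
    (hgrad : ∀ y, HasGradientAt f (f' y) y) (hlip : LipschitzWith (Real.toNNReal L) f')
    (x y : E) : f y ≤ f x + ⟪f' x, y - x⟫ + L / 2 * ‖y - x‖ ^ 2 := by
  set v := y - x
  set φ : ℝ → ℝ := fun s => f (x + s • v) - s * ⟪f' x, v⟫ - L * s ^ 2 / 2 * ‖v‖ ^ 2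
  have hφ' : ∀ s : ℝ, HasDerivAt φ (⟪f' (x + s • v), v⟫ - ⟪f' x, v⟫ - L * s * ‖v‖ ^ 2) s := by
    intro s
    have hline : HasDerivAt (fun s : ℝ => x + s • v) v s := by
      simpa using ((hasDerivAt_id s).smul_const v).const_add x
    have hsq : HasDerivAt (fun s : ℝ => L * s ^ 2 / 2 * ‖v‖ ^ 2) (L * s * ‖v‖ ^ 2) s := by
      refine ((((hasDerivAt_pow 2 s).const_mul L).div_const 2).mul_const (‖v‖ ^ 2)).congr_deriv ?_
      push_cast
      ring
    exact (((hgrad _).hasFDerivAt.comp_hasDerivAt s hline).sub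
      (by simpa using (hasDerivAt_id s).mul_const ⟪f' x, v⟫)).sub hsq
  have hinner_le : ∀ s, 0 ≤ s → ⟪f' (x + s • v), v⟫ - ⟪f' x, v⟫ ≤ L * s * ‖v‖ ^ 2 := by
    intro s hs
    have hdist : ‖f' (x + s • v) - f' x‖ ≤ L * (s * ‖v‖) := by
      simpa [dist_eq_norm, norm_smul, abs_of_nonneg hs, Real.coe_toNNReal _ hL] using
        hlip.dist_le_mul (x + s • v) x
    calc ⟪f' (x + s • v), v⟫ - ⟪f' x, v⟫ = ⟪f' (x + s • v) - f' x, v⟫ := (inner_sub_left ..).symm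
      _ ≤ ‖f' (x + s • v) - f' x‖ * ‖v‖ := real_inner_le_norm _ _
      _ ≤ L * (s * ‖v‖) * ‖v‖ := by gcongr
      _ = L * s * ‖v‖ ^ 2 := by ring
  have hanti : AntitoneOn φ (Set.Icc 0 1) := by
    refine antitoneOn_of_deriv_nonpos (convex_Icc 0 1)
      (HasDerivAt.continuousOn fun s _ => hφ' s)
      (fun s _ => (hφ' s).differentiableAt.differentiableWithinAt) fun s hs => ?_
    rw [interior_Icc] at hs
    rw [(hφ' s).deriv]
    linarith [hinner_le s hs.1.le]
  have h01 := hanti (Set.left_mem_Icc.mpr zero_le_one) (Set.right_mem_Icc.mpr zero_le_one)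
    zero_le_one
  simp only [φ, v, zero_smul, add_zero, one_smul, add_sub_cancel] at h01
  linarith

theorem integral_comp_sub_smul_le {Ω : Type*} {_ : MeasurableSpace Ω} {P : Measure Ω}
    (hL : 0 ≤ L) (hgrad : ∀ y, HasGradientAt f (f' y) y)
    (hlip : LipschitzWith (Real.toNNReal L) f') {X G : Ω → E} (a : ℝ)
    (hfX : Integrable (fun ω => f (X ω)) P) (hfX' : Integrable (fun ω => f (X ω - a • G ω)) P)
    (hinner : Integrable (fun ω => ⟪f' (X ω), G ω⟫) P)
    (hG : Integrable (fun ω => ‖G ω‖ ^ 2) P) :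
    ∫ ω, f (X ω - a • G ω) ∂P ≤
      ∫ ω, f (X ω) ∂P - a * ∫ ω, ⟪f' (X ω), G ω⟫ ∂P + L / 2 * a ^ 2 * ∫ ω, ‖G ω‖ ^ 2 ∂P := by
  have hstep : ∀ ω, f (X ω - a • G ω) ≤
      f (X ω) - a * ⟪f' (X ω), G ω⟫ + L / 2 * a ^ 2 * ‖G ω‖ ^ 2 := fun ω => by
    have := le_add_inner_add_sq_of_lipschitzWith_gradient hL hgrad hlip (X ω) (X ω - a • G ω)
    rwa [sub_sub_cancel_left, inner_neg_right, real_inner_smul_right, norm_neg, norm_smul,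
      mul_pow, Real.norm_eq_abs, sq_abs, ← sub_eq_add_neg, ← mul_assoc] at this
  have hint : ∫ ω, f (X ω - a • G ω) ∂P ≤
      ∫ ω, (f (X ω) - a * ⟪f' (X ω), G ω⟫ + L / 2 * a ^ 2 * ‖G ω‖ ^ 2) ∂P :=
    integral_mono hfX' ((hfX.sub (hinner.const_mul a)).add (hG.const_mul _)) hstep
  rwa [integral_add ?_ (hG.const_mul _), integral_sub hfX (hinner.const_mul a),
    integral_const_mul, integral_const_mul] at hint
  exact hfX.sub (hinner.const_mul a)

end Descent

theorem dp_sgd_convergence_general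
    {Ω : Type*} {m0 : MeasurableSpace Ω} {P : Measure Ω} [IsProbabilityMeasure P]
    {d : ℕ} (ℱ : Filtration ℕ m0)
    (f : EuclideanSpace ℝ (Fin d) → ℝ)
    (f' : EuclideanSpace ℝ (Fin d) → EuclideanSpace ℝ (Fin d))
    (L fstar q D σ2 : ℝ) (hL : 0 < L) (hq : 0 < q) (hD : 0 < D)
    (hgrad : ∀ y, HasGradientAt f (f' y) y)
    (hlip : LipschitzWith (Real.toNNReal L) f')
    (hbdd : ∀ y, fstar ≤ f y)
    (x gDP : ℕ → Ω → EuclideanSpace ℝ (Fin d)) (η : ℕ → Ω → ℝ) (α : ℕ → ℝ)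
    (hη01 : ∀ t ω, 0 ≤ η t ω ∧ η t ω ≤ 1)
    (hfint : ∀ t, Integrable (fun ω => f (x t ω)) P)
    (hg2int : ∀ t, Integrable (fun ω => ‖gDP t ω‖ ^ 2) P)
    (hinnerint : ∀ t, Integrable (fun ω => ⟪f' (x t ω), gDP t ω⟫) P)
    (hrec : ∀ t ω, x (t + 1) ω = x t ω - α t • gDP t ω)
    (hg2 : ∀ t, ∀ᵐ ω ∂P,
      (P[fun ω => ‖gDP t ω‖ ^ 2 | ℱ t]) ω ≤ q ^ 2 * (1 + d * σ2))
    (hinner : ∀ t, ∀ᵐ ω ∂P,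
      (P[fun ω => -⟪f' (x t ω), gDP t ω⟫ | ℱ t]) ω ≤
        -((1 - η t ω) * ‖f' (x t ω)‖ ^ 2 + D * η t ω * q * ‖f' (x t ω)‖))
    (hαpos : ∀ t, 0 < α t)
    (hα2 : Summable fun t => α t ^ 2)
    (hαdiv : ¬ Summable fun t => α (t + 1) / ∑ i ∈ Finset.range (t + 1), α i) :
    ∀ᵐ ω ∂P,
      Tendsto
        (fun t => (∑ i ∈ Finset.range t, α i) *
          (Finset.range (t + 1)).inf' Finset.nonempty_range_add_one
            (fun i => (1 - η i ω) * ‖f' (x i ω)‖ ^ 2 +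
              D * η i ω * q * ‖f' (x i ω)‖))
        atTop (nhds 0) := by
  set C := q ^ 2 * (1 + d * σ2)
  set h : ℕ → Ω → ℝ := fun t ω =>
    (1 - η t ω) * ‖f' (x t ω)‖ ^ 2 + D * η t ω * q * ‖f' (x t ω)‖
  -- `u t = E_t ⟪∇f(xₜ), gₜ⟫` is an integrable majorant of `h t`.
  set u : ℕ → Ω → ℝ := fun t => -P[fun ω => -⟪f' (x t ω), gDP t ω⟫ | ℱ t]
  have h_nonneg : ∀ t ω, 0 ≤ h t ω := fun t ω => by
    obtain ⟨hη0, hη1⟩ := hη01 t ω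
    have := sub_nonneg.mpr hη1
    positivity
  have h_le_u : ∀ t, ∀ᵐ ω ∂P, h t ω ≤ u t ω := fun t =>
    (hinner t).mono fun ω hω => by simp only [h, u, Pi.neg_apply]; linarith
  have integral_u : ∀ t, ∫ ω, u t ω ∂P = ∫ ω, ⟪f' (x t ω), gDP t ω⟫ ∂P := fun t => by
    simp only [u, Pi.neg_apply, integral_neg, integral_condExp (ℱ.le t), neg_neg]
  have integral_g2 : ∀ t, ∫ ω, ‖gDP t ω‖ ^ 2 ∂P ≤ C := fun t =>
    integral_le_of_ae_condExp_le (ℱ.le t) (hg2 t)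
  have hC : 0 ≤ C := (integral_nonneg fun _ => by positivity).trans (integral_g2 0)
  have hstep : ∀ t, ∫ ω, α t * u t ω ∂P ≤
      ∫ ω, f (x t ω) ∂P - ∫ ω, f (x (t + 1) ω) ∂P + L / 2 * C * α t ^ 2 := fun t => by
    have hdesc := integral_comp_sub_smul_le hL.le hgrad hlip (α t) (hfint t)
      (by simpa only [hrec] using hfint (t + 1)) (hinnerint t) (hg2int t)
    simp only [← hrec] at hdesc
    rw [integral_const_mul, integral_u]
    have := mul_le_mul_of_nonneg_left (integral_g2 t) (by positivity : 0 ≤ L / 2 * α t ^ 2)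
    linarith
  have hsum : ∀ᵐ ω ∂P, Summable fun t => α t * u t ω :=
    ae_summable_of_integral_le_sub_add hfint (fun t ω => hbdd (x t ω))
      (fun t => integrable_condExp.neg.const_mul _)
      (fun t => (h_le_u t).mono fun ω hω => mul_nonneg (hαpos t).le ((h_nonneg t ω).trans hω))
      (fun t => mul_nonneg (mul_nonneg (by positivity) hC) (sq_nonneg _)) (hα2.mul_left _) hstep
  have hα_not : ¬ Summable α := fun hs =>
    hαdiv (summable_div_sum_range_of_summable (fun t => (hαpos t).le) (hαpos 0) hs)
  filter_upwards [hsum, ae_all_iff.2 h_le_u] with ω hsum_ω hle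
  exact tendsto_sum_range_mul_inf'_of_summable_mul (fun t => (hαpos t).le) (h_nonneg · ω) hα_not
    (hsum_ω.of_nonneg_of_le (fun t => mul_nonneg (hαpos t).le (h_nonneg t ω))
      fun t => mul_le_mul_of_nonneg_left (hle t) (hαpos t).le)

/-- almost sure convergence rate of DP-SGD (non-convex case).
Almost surely, `min_{1≤i≤t} [(1−η_i)‖∇f(x_i)‖² + D η_i q ‖∇f(x_i)‖]`
is `o(1/∑_{i<t} α_i)`. -/
theorem dp_sgd_convergence
    {Ω : Type*} {m0 : MeasurableSpace Ω} {P : Measure Ω} [IsProbabilityMeasure P]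
    {d : ℕ} (ℱ : Filtration ℕ m0)
    (f : EuclideanSpace ℝ (Fin d) → ℝ)
    (f' : EuclideanSpace ℝ (Fin d) → EuclideanSpace ℝ (Fin d))
    (L fstar q D σ2 : ℝ) (hL : 0 < L) (hq : 0 < q) (hD : 0 < D) (hσ2 : 0 ≤ σ2)
    (hgrad : ∀ y, HasGradientAt f (f' y) y)
    (hlip : LipschitzWith (Real.toNNReal L) f')
    (hbdd : ∀ y, fstar ≤ f y)
    (x gDP : ℕ → Ω → EuclideanSpace ℝ (Fin d)) (η : ℕ → Ω → ℝ) (α : ℕ → ℝ)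
    (hxadp : Adapted ℱ x) (hηadp : Adapted ℱ η)
    (hη01 : ∀ t ω, 0 ≤ η t ω ∧ η t ω ≤ 1)
    (hfint : ∀ t, Integrable (fun ω => f (x t ω)) P)
    (hg2int : ∀ t, Integrable (fun ω => ‖gDP t ω‖ ^ 2) P)
    (hinnerint : ∀ t, Integrable (fun ω => ⟪f' (x t ω), gDP t ω⟫) P)
    (hrec : ∀ t ω, x (t + 1) ω = x t ω - α t • gDP t ω)
    (hg2 : ∀ t, ∀ᵐ ω ∂P,
      (P[fun ω => ‖gDP t ω‖ ^ 2 | ℱ t]) ω ≤ q ^ 2 * (1 + d * σ2))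
    (hinner : ∀ t, ∀ᵐ ω ∂P,
      (P[fun ω => -⟪f' (x t ω), gDP t ω⟫ | ℱ t]) ω ≤
        -((1 - η t ω) * ‖f' (x t ω)‖ ^ 2 + D * η t ω * q * ‖f' (x t ω)‖))
    (hαpos : ∀ t, 0 < α t) (hαmono : Antitone α)
    (hα2 : Summable fun t => α t ^ 2)
    (hαdiv : ¬ Summable fun t => α (t + 1) / ∑ i ∈ Finset.range (t + 1), α i) :
    ∀ᵐ ω ∂P,
      Tendsto
        (fun t => (∑ i ∈ Finset.range t, α i) *
          (Finset.range (t + 1)).inf' Finset.nonempty_range_add_one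
            (fun i => (1 - η i ω) * ‖f' (x i ω)‖ ^ 2 +
              D * η i ω * q * ‖f' (x i ω)‖))
        atTop (nhds 0) :=
  dp_sgd_convergence_general ℱ f f' L fstar q D σ2 hL hq hD hgrad hlip hbdd x gDP η α hη01 hfint
    hg2int hinnerint hrec hg2 hinner hαpos hα2 hαdiv
end

section
/- Let {b_t} and {α_t} be nonnegative sequences and {w_t} a sequence of vectors with ∑_{t=1}^∞ α_t b_t^p < ∞ for some p ≥ 1 and ∑_{t=1}^∞ α_t = ∞. Suppose there exists L > 0 such that for all t and τ ≥ 1, |b_{t+τ} − b_t| ≤ L(∑_{i=t}^{t+τ−1} α_i b_i + ‖∑_{i=t}^{t+τ−1} α_i w_i‖), where ∑_{t=1}^∞ α_t w_t converges. Then b_t → 0. -/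
/-!
If `b` does not tend to `0`, it exceeds `2c` infinitely often for some `c > 0`, while
`∑ α = ∞` and `∑ α b^p < ∞` force `b < c` infinitely often. Take a late time `t` with
`b t ≥ 2c` and the first later time `t'` with `b t' < c`. On `[t, t')` we have `b ≥ c`, so
`c^(p-1) ∑ α b ≤ ∑ α b^p` is a small tail, and `‖∑ α w‖` over `[t, t')` is a small tail of a
convergent series; the oscillation bound then gives `c < |b t' - b t| < c`.
-/

open Filter Finset

lemma CauchySeq.eventually_norm_sum_Ico_lt {E : Type*} [SeminormedAddCommGroup E] {f : ℕ → E}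
    (hf : CauchySeq fun n => ∑ i ∈ range n, f i) {ε : ℝ} (hε : 0 < ε) :
    ∀ᶠ t in atTop, ∀ t', t ≤ t' → ‖∑ i ∈ Ico t t', f i‖ < ε := by
  obtain ⟨N, hN⟩ := Metric.cauchySeq_iff.1 hf ε hε
  filter_upwards [eventually_ge_atTop N] with t ht t' htt'
  rw [sum_Ico_eq_sub _ htt', ← dist_eq_norm]
  exact hN t' (ht.trans htt') t ht

lemma frequently_lt_of_summable_mul_of_not_summable {α f : ℕ → ℝ} (hα : ∀ n, 0 ≤ α n)
    (hdiv : ¬Summable α) (hsum : Summable fun n => α n * f n) {c : ℝ} (hc : 0 < c) :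
    ∃ᶠ n in atTop, f n < c := by
  by_contra h
  simp only [not_frequently, not_lt] at h
  refine hdiv (Summable.of_norm_bounded_eventually_nat (hsum.mul_left c⁻¹) ?_)
  filter_upwards [h] with n hn
  rw [Real.norm_of_nonneg (hα n), le_inv_mul_iff₀ hc, mul_comm c]
  exact mul_le_mul_of_nonneg_left hn (hα n)

lemma exists_first_ge_of_frequently {P : ℕ → Prop} (h : ∃ᶠ n in atTop, P n) (t : ℕ) :
    ∃ t', t ≤ t' ∧ P t' ∧ ∀ j ∈ Ico t t', ¬P j := by
  classical
  have hex : ∃ n, t ≤ n ∧ P n := (frequently_atTop.1 h) t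
  obtain ⟨htt', hP⟩ := Nat.find_spec hex
  exact ⟨Nat.find hex, htt', hP, fun j hj => fun hPj =>
    Nat.find_min hex (mem_Ico.1 hj).2 ⟨(mem_Ico.1 hj).1, hPj⟩⟩

lemma Real.rpow_sub_one_mul_le_rpow {c x p : ℝ} (hc : 0 < c) (hcx : c ≤ x) (hp : 1 ≤ p) :
    c ^ (p - 1) * x ≤ x ^ p := by
  have hx : 0 < x := hc.trans_le hcx
  calc c ^ (p - 1) * x ≤ x ^ (p - 1) * x :=
        mul_le_mul_of_nonneg_right (Real.rpow_le_rpow hc.le hcx (by linarith)) hx.le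
    _ = x ^ p := by rw [Real.rpow_sub_one hx.ne', div_mul_cancel₀ _ hx.ne']

lemma rpow_sub_one_mul_sum_le_sum_rpow {ι : Type*} (s : Finset ι) {α b : ι → ℝ} {c p : ℝ}
    (hα : ∀ i, 0 ≤ α i) (hc : 0 < c) (hcb : ∀ i ∈ s, c ≤ b i) (hp : 1 ≤ p) :
    c ^ (p - 1) * ∑ i ∈ s, α i * b i ≤ ∑ i ∈ s, α i * b i ^ p := by
  rw [mul_sum]
  refine sum_le_sum fun i hi => ?_
  rw [mul_left_comm]
  exact mul_le_mul_of_nonneg_left (Real.rpow_sub_one_mul_le_rpow hc (hcb i hi) hp) (hα i)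

/-- Lemma 1 of Orabona 2020: last-iterate convergence lemma. -/
theorem last_iterate_lemma {d : ℕ} (b α : ℕ → ℝ) (w : ℕ → EuclideanSpace ℝ (Fin d))
    (p : ℝ) (hp : 1 ≤ p) (hb : ∀ t, 0 ≤ b t) (hα : ∀ t, 0 ≤ α t)
    (hsum : Summable fun t => α t * b t ^ p)
    (hdiv : ¬ Summable α) (L : ℝ) (hL : 0 < L)
    (hosc : ∀ t τ : ℕ, 1 ≤ τ →
      |b (t + τ) - b t| ≤
        L * ((∑ i ∈ Ico t (t + τ), α i * b i) + ‖∑ i ∈ Ico t (t + τ), α i • w i‖))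
    (hconv : ∃ S, Tendsto (fun T => ∑ t ∈ range T, α t • w t) atTop (nhds S)) :
    Tendsto b atTop (nhds 0) := by
  refine tendsto_order.2 ⟨fun a ha => .of_forall fun t => ha.trans_le (hb t), fun ε hε => ?_⟩
  by_contra hbig
  simp only [not_eventually, not_lt] at hbig
  obtain ⟨c, hc, rfl⟩ : ∃ c, 0 < c ∧ ε = 2 * c := ⟨ε / 2, half_pos hε, by ring⟩
  have hsmall : ∃ᶠ n in atTop, b n < c :=
    (frequently_lt_of_summable_mul_of_not_summable hα hdiv hsum (Real.rpow_pos_of_pos hc p)).mono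
      fun n hn => (Real.rpow_lt_rpow_iff (hb n) hc.le (by linarith)).1 hn
  obtain ⟨S, hS⟩ := hconv
  have htail_b := hsum.hasSum.tendsto_sum_nat.cauchySeq.eventually_norm_sum_Ico_lt
    (by positivity : 0 < c ^ (p - 1) * (c / (2 * L)))
  have htail_w := hS.cauchySeq.eventually_norm_sum_Ico_lt (by positivity : 0 < c / (2 * L))
  obtain ⟨t, hbt, htb, htw⟩ := (hbig.and_eventually (htail_b.and htail_w)).exists
  obtain ⟨t', htt', hbt', hmid⟩ := exists_first_ge_of_frequently hsmall t
  have hlt : t < t' := htt'.lt_of_ne (by rintro rfl; linarith)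
  have hsum_b : ∑ i ∈ Ico t t', α i * b i < c / (2 * L) := by
    refine lt_of_mul_lt_mul_left ?_ (Real.rpow_nonneg hc.le (p - 1))
    calc c ^ (p - 1) * ∑ i ∈ Ico t t', α i * b i
        ≤ ∑ i ∈ Ico t t', α i * b i ^ p :=
          rpow_sub_one_mul_sum_le_sum_rpow _ hα hc (fun i hi => not_lt.1 (hmid i hi)) hp
      _ < c ^ (p - 1) * (c / (2 * L)) := (le_abs_self _).trans_lt (htb t' htt')
  have hosc_t := hosc t (t' - t) (by omega)
  rw [Nat.add_sub_cancel' hlt.le] at hosc_t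
  have hL_halves : L * (c / (2 * L) + c / (2 * L)) = c := by field_simp; ring
  have hosc_lt := mul_lt_mul_of_pos_left (add_lt_add hsum_b (htw t' htt')) hL
  linarith [neg_abs_le (b t' - b t)]
end
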